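/- arXiv:1403.1951 — 2 statements merged into one kernel-verified Lean document; each statement's English description precedes it below -/
import Mathlib

section
/- Let h be an erasing solution of rank n−1 of a word equation E in n unknowns x₁,…,xₙ. Then h(x_k) is the empty word for exactly one index k, the equation δ_k(E) obtained from E by erasing the variable x_k is trivial, and Γ_h = {u ∈ ℚⁿ : u_k = 0}, i.e., Γ_h = 𝒩(e_k)ℚ for the k-th canonical basis vector e_k. -/
open scoped BigOperators

namespace WordEquations

/-- The set of letters occurring in the images of a (letter-image) morphism. -/
def alph {Ξ Δ : Type*} (h : Ξ → List Δ) : Set Δ := ⋃ x, {a | a ∈ h x}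

/-- `h` is a solution of the system `T` of word equations. -/
def IsSolution {Ξ A : Type*} (h : Ξ → List A) (T : Set (List Ξ × List Ξ)) : Prop :=
  ∀ e ∈ T, e.1.flatMap h = e.2.flatMap h

/-- `h` is a solution of the single word equation `E`. -/
def IsSolutionE {Ξ A : Type*} (h : Ξ → List A) (E : List Ξ × List Ξ) : Prop :=
  E.1.flatMap h = E.2.flatMap h

/-- `θ` is a renaming of letters on the set `S`: it maps each letter of `S` to a
single letter, injectively on `S`. -/
def IsRenamingOn {A B : Type*} (θ : A → List B) (S : Set A) : Prop :=
  (∀ a ∈ S, ∃ b, θ a = [b]) ∧ ∀ a₁ ∈ S, ∀ a₂ ∈ S, θ a₁ = θ a₂ → a₁ = a₂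

/-- `g` is a principal solution of `T`: whenever `g = θ ∘ g'` for a solution `g'`
(and a morphism `θ` non-erasing on `alph g'`), `θ` is a renaming of letters. -/
def IsPrincipalSolution {Ξ Δ : Type*} (g : Ξ → List Δ) (T : Set (List Ξ × List Ξ)) : Prop :=
  IsSolution g T ∧
  ∀ (Δ' : Type) (g' : Ξ → List Δ') (θ : Δ' → List Δ),
    IsSolution g' T → (∀ a ∈ alph g', θ a ≠ []) →
    (∀ x, g x = (g' x).flatMap θ) → IsRenamingOn θ (alph g')

/-- The vector `γ(h)_a = (|h(x₁)|_a, …, |h(xₙ)|_a) ∈ ℚⁿ`. -/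
def gamVec {n : ℕ} {Δ : Type*} [DecidableEq Δ] (h : Fin n → List Δ) (a : Δ) :
    Fin n → ℚ := fun j => ((h j).count a : ℚ)

/-- `Γ_h`, the ℚ-span of the vectors `γ(h)_a`. -/
noncomputable def GammaSpace {n : ℕ} {Δ : Type*} [DecidableEq Δ] (h : Fin n → List Δ) :
    Submodule ℚ (Fin n → ℚ) := Submodule.span ℚ (Set.range (gamVec h))

/-- The rank of a morphism: `dim Γ_h`. -/
noncomputable def morphRank {n : ℕ} {Δ : Type*} [DecidableEq Δ] (h : Fin n → List Δ) : ℕ :=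
  Module.finrank ℚ ↥(GammaSpace h)

/-- `Mℕ`: all finite nonempty sums `Σᵢ aᵢ αᵢ` with `aᵢ` positive integers and `αᵢ ∈ M`
(equivalently, nonempty finite sums of elements of `M` with repetitions). -/
def natSums {n : ℕ} (M : Set (Fin n → ℚ)) : Set (Fin n → ℚ) :=
  {v | ∃ l : List (Fin n → ℚ), l ≠ [] ∧ (∀ x ∈ l, x ∈ M) ∧ l.sum = v}

/-- `M ⊆ ℚⁿ` has rank `r`: the ℚ-span of `M` has dimension `r`, and `M` is not contained
in any finite union of `(r-1)`-dimensional subspaces of its span. -/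
def HasRank {n : ℕ} (M : Set (Fin n → ℚ)) (r : ℕ) : Prop :=
  Module.finrank ℚ ↥(Submodule.span ℚ M) = r ∧
  ∀ V : Finset (Submodule ℚ (Fin n → ℚ)),
    (∀ W ∈ V, W ≤ Submodule.span ℚ M ∧ Module.finrank ℚ ↥W + 1 = r) →
    ¬ M ⊆ ⋃ W ∈ V, (W : Set (Fin n → ℚ))

/-- The monomial `X^α = ∏ᵢ Xᵢ^{αᵢ}` in `ℤ[X₁,…,Xₙ]`. -/
noncomputable def Xpow {n : ℕ} (α : Fin n → ℕ) : MvPolynomial (Fin n) ℤ :=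
  ∏ i, MvPolynomial.X i ^ α i

/-- The polynomial `Σ_{a : w_a = j} ∏_{t<a} X_{w_t}` associated with one side of an equation. -/
noncomputable def sideS {n : ℕ} (w : List (Fin n)) (j : Fin n) : MvPolynomial (Fin n) ℤ :=
  ∑ a : Fin w.length, if w.get a = j then ((w.take (a : ℕ)).map MvPolynomial.X).prod else 0

/-- The polynomial `S_{E,x_j}` of the equation `E = (u,v)`. -/
noncomputable def SE {n : ℕ} (E : List (Fin n) × List (Fin n)) (j : Fin n) :
    MvPolynomial (Fin n) ℤ :=
  sideS E.1 j - sideS E.2 j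

/-- Evaluation `p ↦ p(β)`, induced by `Xᵢ ↦ x^{βᵢ}`. -/
noncomputable def evalAt {n : ℕ} (β : Fin n → ℕ) (p : MvPolynomial (Fin n) ℤ) : Polynomial ℤ :=
  MvPolynomial.eval₂ (Int.castRingHom (Polynomial ℤ)) (fun i => Polynomial.X ^ β i) p

/-- `λ⁺`, the positive part of an integer vector. -/
def lamPos {n : ℕ} (lam : Fin n → ℤ) : Fin n → ℕ := fun i => (lam i).toNat

/-- `λ⁻`, the negative part of an integer vector. -/
def lamNeg {n : ℕ} (lam : Fin n → ℤ) : Fin n → ℕ := fun i => (-(lam i)).toNat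

/-- The length type `L(θ_α ∘ h)` of the composition of `h` with the power morphism
`θ_α : aᵢ ↦ aᵢ^{αᵢ}`. -/
def powLenType {n k : ℕ} (α : Fin k → ℕ) (h : Fin n → List (Fin k)) : Fin n → ℕ :=
  fun x => ∑ a, α a * (h x).count a

/-- The field `ℚ(x)`, realized as the field of fractions of `ℤ[x]`. -/
noncomputable abbrev RatX : Type := FractionRing (Polynomial ℤ)

/-- The vector `𝒮_E(β) ∈ ℚ(x)ⁿ`. -/
noncomputable def SEvec {n : ℕ} (E : List (Fin n) × List (Fin n)) (β : Fin n → ℕ) :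
    Fin n → RatX :=
  fun j => algebraMap (Polynomial ℤ) RatX (evalAt β (SE E j))

/-- The set of exponents of the minimal monomials of `p` (exponents in the support of `p`
that are minimal with respect to the componentwise order). -/
noncomputable def minimalSupport {n : ℕ} (p : MvPolynomial (Fin n) ℤ) : Finset (Fin n →₀ ℕ) :=
  p.support.filter (fun β => ∀ β' ∈ p.support, β' ≤ β → β' = β)

/-!
Since `h` erases `x`, every `γ(h)_a` lies in the hyperplane `u x = 0`, and the rank hypothesis
forces `Γ_h` to be that hyperplane. Dually, the Parikh vectors of the words `h z`, `z ≠ x`, are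
then linearly independent; in particular none of them is empty.

A morphism whose Parikh vectors are linearly independent is injective on words, by induction on
the length of a common image `h(x u) = h(y v)`. If `x = y`, cancel. Otherwise, say `h y = h x w`;
then `h` factors as the morphism `h'` with `y ↦ w` composed with the Nielsen substitution
`y ↦ x y`, the Parikh vectors of `h'` arise from those of `h` by a transvection and so stay
independent, and `h'` solves the shorter equation `u' = y v'` whose left side cannot start
with `y`.
-/

open Finsupp in
lemma _root_.LinearIndepOn.update_sub {ι R M : Type*} [CommRing R] [AddCommGroup M] [Module R M]
    [DecidableEq ι] {v : ι → M} {s : Set ι} (hv : LinearIndepOn R v s) {x y : ι} (hx : x ∈ s)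
    (hxy : x ≠ y) :
    LinearIndepOn R (Function.update v y (v y - v x)) s := by
  rw [linearIndepOn_iff] at hv ⊢
  intro l hl hl0
  have hupdate : Function.update v y (v y - v x) = v - Pi.single y (v x) := by
    ext z
    by_cases hz : z = y <;> simp [hz]
  have hcomb : linearCombination R (Function.update v y (v y - v x)) l =
      linearCombination R v l - l y • v x := by
    rw [hupdate, ← bilinearCombination_apply R (S := R), map_sub, LinearMap.sub_apply,
      bilinearCombination_apply, bilinearCombination_apply, linearCombination_single_index]
  have hl' : l - single x (l y) = 0 :=
    hv _ (sub_mem hl (single_mem_supported R _ hx)) (by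
      rw [map_sub, linearCombination_single, ← hcomb, hl0])
  have hy : l y = 0 := by simpa [hxy] using DFunLike.congr_fun hl' y
  simpa [hy] using hl'

section Words

variable {Ξ Δ : Type*}

section Parikh

variable [DecidableEq Δ]

def parikhVec (w : List Δ) : Δ → ℚ := fun a => w.count a

@[simp]
lemma parikhVec_nil : parikhVec ([] : List Δ) = 0 := by
  ext a; simp [parikhVec]

lemma parikhVec_append (w₁ w₂ : List Δ) :
    parikhVec (w₁ ++ w₂) = parikhVec w₁ + parikhVec w₂ := by
  ext a; simp [parikhVec, List.count_append]

variable {h : Ξ → List Δ} {s : Set Ξ}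

lemma ne_nil_of_linearIndepOn_parikhVec (hind : LinearIndepOn ℚ (fun z => parikhVec (h z)) s)
    {z : Ξ} (hz : z ∈ s) : h z ≠ [] := by
  intro hnil
  simpa [hnil] using hind.ne_zero hz

lemma flatMap_ne_nil_of_linearIndepOn (hind : LinearIndepOn ℚ (fun z => parikhVec (h z)) s)
    {u : List Ξ} (hu : ∀ z ∈ u, z ∈ s) (hne : u ≠ []) : u.flatMap h ≠ [] := by
  obtain ⟨z, hz⟩ := List.exists_mem_of_ne_nil u hne
  rw [Ne, List.flatMap_eq_nil_iff, not_forall]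
  exact ⟨z, fun h' => ne_nil_of_linearIndepOn_parikhVec hind (hu z hz) (h' hz)⟩

lemma length_flatMap_lt_length_flatMap_cons
    (hind : LinearIndepOn ℚ (fun z => parikhVec (h z)) s) {x : Ξ} (hx : x ∈ s) (u : List Ξ) :
    (u.flatMap h).length < ((x :: u).flatMap h).length := by
  have := List.length_pos_iff.mpr (ne_nil_of_linearIndepOn_parikhVec hind hx)
  simp only [List.flatMap_cons, List.length_append]
  omega

lemma linearIndepOn_parikhVec_update [DecidableEq Ξ]
    (hind : LinearIndepOn ℚ (fun z => parikhVec (h z)) s) {x y : Ξ} (hx : x ∈ s) (hxy : x ≠ y)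
    {w : List Δ} (hw : h y = h x ++ w) :
    LinearIndepOn ℚ (fun z => parikhVec (Function.update h y w z)) s := by
  have hupdate : (fun z => parikhVec (Function.update h y w z)) =
      Function.update (fun z => parikhVec (h z)) y (parikhVec (h y) - parikhVec (h x)) := by
    ext1 z
    by_cases hz : z = y
    · subst hz; simp [hw, parikhVec_append]
    · simp [hz]
  rw [hupdate]
  exact hind.update_sub hx hxy

end Parikh

section Nielsen

variable [DecidableEq Ξ] {h : Ξ → List Δ} {s : Set Ξ}

def nielsen (x y : Ξ) (z : Ξ) : List Ξ := if z = y then [x, y] else [z]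

lemma flatMap_nielsen_flatMap_update {x y : Ξ} {w : List Δ} (hxy : x ≠ y) (hw : h y = h x ++ w)
    (u : List Ξ) :
    (u.flatMap (nielsen x y)).flatMap (Function.update h y w) = u.flatMap h := by
  rw [List.flatMap_assoc]
  congr 1
  ext1 z
  by_cases hz : z = y
  · subst hz; simp [nielsen, hxy, hw]
  · simp [nielsen, hz]

lemma mem_of_mem_flatMap_nielsen {x y : Ξ} (hx : x ∈ s) {u : List Ξ} (hu : ∀ z ∈ u, z ∈ s) :
    ∀ z ∈ u.flatMap (nielsen x y), z ∈ s := by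
  intro z hz
  obtain ⟨t, ht, hzt⟩ := List.mem_flatMap.mp hz
  unfold nielsen at hzt
  split_ifs at hzt with hty
  · rcases List.mem_pair.mp hzt with rfl | rfl
    · exact hx
    · exact hty ▸ hu t ht
  · exact List.mem_singleton.mp hzt ▸ hu t ht

lemma head?_flatMap_nielsen_ne {x y : Ξ} (hxy : x ≠ y) (u : List Ξ) :
    (u.flatMap (nielsen x y)).head? ≠ some y := by
  cases u with
  | nil => simp
  | cons z u =>
    by_cases hz : z = y
    · simp [nielsen, hz, hxy]
    · simp [nielsen, hz]

end Nielsen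

lemma flatMap_filter_ne_of_eq_nil [DecidableEq Ξ] {h : Ξ → List Δ} {x : Ξ} (hx : h x = [])
    (u : List Ξ) :
    (u.filter fun z => z ≠ x).flatMap h = u.flatMap h := by
  induction u with
  | nil => rfl
  | cons z u ih =>
    by_cases hz : z = x
    · simpa [hz, hx] using ih
    · simpa [hz] using ih

theorem eq_of_flatMap_eq_of_linearIndepOn [DecidableEq Ξ] [DecidableEq Δ] {h : Ξ → List Δ}
    {s : Set Ξ} (hind : LinearIndepOn ℚ (fun z => parikhVec (h z)) s)
    {u v : List Ξ} (hu : ∀ z ∈ u, z ∈ s) (hv : ∀ z ∈ v, z ∈ s)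
    (huv : u.flatMap h = v.flatMap h) : u = v := by
  induction hN : (u.flatMap h).length using Nat.strong_induction_on generalizing h u v with
  | _ N ih =>
  rcases u with _ | ⟨x, u⟩ <;> rcases v with _ | ⟨y, v⟩
  · rfl
  · exact absurd huv.symm (flatMap_ne_nil_of_linearIndepOn hind hv (List.cons_ne_nil y v))
  · exact absurd huv (flatMap_ne_nil_of_linearIndepOn hind hu (List.cons_ne_nil x u))
  have hltu := hN ▸ length_flatMap_lt_length_flatMap_cons hind (hu x List.mem_cons_self) u
  have hltv := length_flatMap_lt_length_flatMap_cons hind (hv y List.mem_cons_self) v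
  rw [← huv, hN] at hltv
  clear hN
  rw [List.forall_mem_cons] at hu hv
  obtain ⟨hxs, hu⟩ := hu
  obtain ⟨hys, hv⟩ := hv
  rw [List.flatMap_cons, List.flatMap_cons] at huv
  by_cases hxy : x = y
  · subst hxy
    rw [ih _ hltu hind hu hv (List.append_cancel_left huv) rfl]
  wlog hle : (h x).length ≤ (h y).length generalizing x y u v
  · exact (this y v x u huv.symm hltv hltu hys hv hxs hu (Ne.symm hxy) (by omega)).symm
  obtain ⟨w, hw⟩ : h x <+: h y := List.prefix_of_prefix_length_le
    (huv ▸ List.prefix_append _ _) (List.prefix_append _ _) hle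
  rw [← hw, List.append_assoc] at huv
  have hfactor := flatMap_nielsen_flatMap_update hxy hw.symm
  have hshift : u.flatMap (nielsen x y) = y :: v.flatMap (nielsen x y) :=
    ih _ hltu (linearIndepOn_parikhVec_update hind hxs hxy hw.symm)
      (mem_of_mem_flatMap_nielsen hxs hu)
      (List.forall_mem_cons.mpr ⟨hys, mem_of_mem_flatMap_nielsen hxs hv⟩)
      (by rw [List.flatMap_cons, hfactor, hfactor, Function.update_self,
        List.append_cancel_left huv])
      (hfactor u ▸ rfl)
  exact (head?_flatMap_nielsen_ne hxy u (congrArg List.head? hshift)).elim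

end Words

section GammaSpace

lemma finrank_ker_proj {ι K : Type*} [Field K] [Fintype ι] [DecidableEq ι] (i : ι) :
    Module.finrank K (LinearMap.ker (LinearMap.proj i : (ι → K) →ₗ[K] K)) =
      Fintype.card ι - 1 := by
  have hproj : (LinearMap.proj i : (ι → K) →ₗ[K] K) ≠ 0 := fun h0 => by
    simpa using LinearMap.congr_fun h0 (Pi.single i 1)
  have := Module.Dual.finrank_ker_add_one_of_ne_zero hproj
  rw [Module.finrank_fintype_fun_eq_card] at this
  omega

variable {n : ℕ} {Δ : Type*} [DecidableEq Δ] {h : Fin n → List Δ}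

lemma gammaSpace_le_ker_proj {x : Fin n} (hx : h x = []) :
    GammaSpace h ≤ LinearMap.ker (LinearMap.proj x : (Fin n → ℚ) →ₗ[ℚ] ℚ) := by
  rw [GammaSpace, Submodule.span_le]
  rintro _ ⟨a, rfl⟩
  simp [gamVec, hx]

lemma gammaSpace_eq_ker_proj {x : Fin n} (hx : h x = []) (hrank : morphRank h = n - 1) :
    GammaSpace h = LinearMap.ker (LinearMap.proj x : (Fin n → ℚ) →ₗ[ℚ] ℚ) :=
  Submodule.eq_of_le_of_finrank_le (gammaSpace_le_ker_proj hx) (by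
    rw [finrank_ker_proj, Fintype.card_fin, ← hrank, morphRank])

open Finsupp in
lemma linearIndepOn_parikhVec_of_single_mem {s : Set (Fin n)}
    (hs : ∀ j ∈ s, Pi.single j 1 ∈ GammaSpace h) :
    LinearIndepOn ℚ (fun j => parikhVec (h j)) s := by
  rw [linearIndepOn_iff]
  intro l hl hl0
  have hker : GammaSpace h ≤ LinearMap.ker (Fintype.linearCombination ℚ ⇑l) := by
    rw [GammaSpace, Submodule.span_le]
    rintro _ ⟨a, rfl⟩
    simpa [linearCombination_apply, sum_fintype, Fintype.linearCombination_apply, gamVec,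
      parikhVec, mul_comm] using congrFun hl0 a
  ext j
  by_cases hj : j ∈ s
  · simpa [Fintype.linearCombination_apply, Pi.single_apply] using hker (hs j hj)
  · exact notMem_support_iff.mp fun hmem => hj (hl hmem)

end GammaSpace

/-- an erasing solution `h` of rank `n-1` of `E` erases exactly one
unknown `x`, the equation `δ_x(E)` is trivial, and `Γ_h = {u ∈ ℚⁿ : u x = 0}`. -/
theorem erasing_solution_rank {n : ℕ} {Δ : Type} [DecidableEq Δ]
    (h : Fin n → List Δ) (E : List (Fin n) × List (Fin n))
    (hsol : IsSolutionE h E) (hrank : morphRank h = n - 1)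
    (herase : ∃ x, h x = []) :
    ∃ x : Fin n, h x = [] ∧ (∀ y, h y = [] → y = x) ∧
      E.1.filter (fun z => z ≠ x) = E.2.filter (fun z => z ≠ x) ∧
      ∀ u : Fin n → ℚ, u ∈ GammaSpace h ↔ u x = 0 := by
  obtain ⟨x, hx⟩ := herase
  have hmem (u : Fin n → ℚ) : u ∈ GammaSpace h ↔ u x = 0 := by
    rw [gammaSpace_eq_ker_proj hx hrank, LinearMap.mem_ker, LinearMap.proj_apply]
  have hind : LinearIndepOn ℚ (fun j => parikhVec (h j)) {x}ᶜ :=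
    linearIndepOn_parikhVec_of_single_mem fun j hj => (hmem _).2 (Pi.single_eq_of_ne' hj 1)
  have hmem_filter (w : List (Fin n)) : ∀ z ∈ w.filter (fun z => z ≠ x), z ∈ ({x}ᶜ : Set (Fin n)) :=
    fun z hz => by simpa using List.of_mem_filter hz
  refine ⟨x, hx, fun y hy => ?_, ?_, hmem⟩
  · by_contra hyx
    exact ne_nil_of_linearIndepOn_parikhVec hind hyx hy
  · refine eq_of_flatMap_eq_of_linearIndepOn hind (hmem_filter E.1) (hmem_filter E.2) ?_
    rw [flatMap_filter_ne_of_eq_nil hx, flatMap_filter_ne_of_eq_nil hx]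
    exact hsol

end WordEquations
end

section
/- For every pair of word equations E and E' in n unknowns and every pair of indices k < ℓ ≤ n, the polynomial t_{kℓ}^{E,E'} = S_{E,x_k}S_{E',x_ℓ} − S_{E',x_k}S_{E,x_ℓ} contains at most 2(|E|_{x_k} + |E|_{x_ℓ}) minimal monomials. -/
open scoped BigOperators

namespace WordEquations

/-!
The exponents of the minimal monomials of a polynomial form an antichain, so their number is
bounded by the number of chains needed to cover the support. The support of the one-sided
polynomial `sideS w j` is a chain (its exponents are the Parikh vectors of prefixes of `w`) with
at most `|w|_j` elements. Hence `S_{E',x}` is covered by two chains, each product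
`sideS w j * S_{E',x}` is a union of `|w|_j` translates of it, and expanding
`t_{kℓ} = S_{E,x_k} S_{E',x_ℓ} - S_{E',x_k} S_{E,x_ℓ}` into four such products gives
`2(|E|_{x_k} + |E|_{x_ℓ})` chains.
-/

open scoped Pointwise

section ChainCover

variable {α : Type*}

def ChainCoverable [LE α] (s : Set α) (N : ℕ) : Prop :=
  ∃ cs : Finset (Set α), cs.card ≤ N ∧ (∀ c ∈ cs, IsChain (· ≤ ·) c) ∧ s ⊆ ⋃ c ∈ cs, c

variable [LE α] {s t : Set α} {N M : ℕ}

theorem IsChain.chainCoverable (hs : IsChain (· ≤ ·) s) : ChainCoverable s 1 :=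
  ⟨{s}, by simp, by simpa using hs, by simp⟩

theorem ChainCoverable.subset (hs : ChainCoverable s N) (hts : t ⊆ s) : ChainCoverable t N := by
  obtain ⟨cs, hcard, hchain, hcov⟩ := hs
  exact ⟨cs, hcard, hchain, hts.trans hcov⟩

theorem ChainCoverable.union (hs : ChainCoverable s N) (ht : ChainCoverable t M) :
    ChainCoverable (s ∪ t) (N + M) := by
  classical
  obtain ⟨cs, hcs, hchain, hcov⟩ := hs
  obtain ⟨ds, hds, hchain', hcov'⟩ := ht
  refine ⟨cs ∪ ds, (Finset.card_union_le _ _).trans (by omega), ?_, ?_⟩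
  · intro c hc
    rcases Finset.mem_union.1 hc with hc | hc
    exacts [hchain c hc, hchain' c hc]
  · rw [Finset.set_biUnion_union]
    exact Set.union_subset_union hcov hcov'

theorem IsAntichain.card_le_of_chainCoverable {A : Finset α}
    (hA : IsAntichain (· ≤ ·) (A : Set α)) (h : ChainCoverable (A : Set α) N) : A.card ≤ N := by
  obtain ⟨cs, hcard, hchain, hcov⟩ := h
  have hmem (a : A) : ∃ c ∈ cs, (a : α) ∈ c := by simpa using hcov a.2
  choose f hf haf using hmem
  calc A.card = (Finset.univ : Finset A).card := by simp
    _ ≤ cs.card := by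
      refine Finset.card_le_card_of_injOn f (fun a _ => hf a) fun a _ b _ hab => ?_
      by_contra hne
      have hne' : (a : α) ≠ b := fun h => hne (Subtype.ext h)
      rcases hchain _ (hf a) (haf a) (hab ▸ haf b) hne' with hle | hle
      exacts [hA a.2 b.2 hne' hle, hA b.2 a.2 hne'.symm hle]
    _ ≤ N := hcard

end ChainCover

theorem ChainCoverable.finset_add {α : Type*} [AddCommMonoid α] [PartialOrder α]
    [IsOrderedAddMonoid α] {t : Set α} {M : ℕ} (A : Finset α)
    (ht : ChainCoverable t M) : ChainCoverable ((A : Set α) + t) (A.card * M) := by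
  classical
  obtain ⟨cs, hcard, hchain, hcov⟩ := ht
  refine ⟨(A ×ˢ cs).image fun p => (p.1 + ·) '' p.2, ?_, ?_, ?_⟩
  · calc _ ≤ (A ×ˢ cs).card := Finset.card_image_le
      _ ≤ A.card * M := by rw [Finset.card_product]; exact Nat.mul_le_mul_left _ hcard
  · simp only [Finset.mem_image, Finset.mem_product]
    rintro _ ⟨⟨a, c⟩, ⟨-, hc⟩, rfl⟩
    exact (hchain c hc).image_of_map_rel _ _ _ fun _ _ h => add_le_add_right h a
  · rintro _ ⟨a, ha, b, hb, rfl⟩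
    obtain ⟨c, hc, hbc⟩ : ∃ c ∈ cs, b ∈ c := by simpa using hcov hb
    simp only [Set.mem_iUnion, Finset.mem_image, Finset.mem_product]
    exact ⟨_, ⟨(a, c), ⟨ha, hc⟩, rfl⟩, b, hbc, rfl⟩

section Polynomial

open MvPolynomial

variable {σ R : Type*} {N M : ℕ}

theorem ChainCoverable.support_add [CommSemiring R] {p q : MvPolynomial σ R}
    (hp : ChainCoverable (p.support : Set (σ →₀ ℕ)) N)
    (hq : ChainCoverable (q.support : Set (σ →₀ ℕ)) M) :
    ChainCoverable ((p + q).support : Set (σ →₀ ℕ)) (N + M) := by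
  classical
  exact (hp.union hq).subset (by exact_mod_cast MvPolynomial.support_add)

theorem ChainCoverable.support_sub [CommRing R] {p q : MvPolynomial σ R}
    (hp : ChainCoverable (p.support : Set (σ →₀ ℕ)) N)
    (hq : ChainCoverable (q.support : Set (σ →₀ ℕ)) M) :
    ChainCoverable ((p - q).support : Set (σ →₀ ℕ)) (N + M) := by
  rw [sub_eq_add_neg]
  exact hp.support_add (by rwa [support_neg])

theorem ChainCoverable.support_mul [CommSemiring R] (p : MvPolynomial σ R) {q : MvPolynomial σ R}
    (hq : ChainCoverable (q.support : Set (σ →₀ ℕ)) M) :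
    ChainCoverable ((p * q).support : Set (σ →₀ ℕ)) (p.support.card * M) := by
  classical
  exact (hq.finset_add p.support).subset (by exact_mod_cast MvPolynomial.support_mul p q)

end Polynomial

theorem isAntichain_minimalSupport {n : ℕ} (p : MvPolynomial (Fin n) ℤ) :
    IsAntichain (· ≤ ·) (minimalSupport p : Set (Fin n →₀ ℕ)) := by
  intro a ha b hb hab hle
  exact hab ((Finset.mem_filter.1 hb).2 a (Finset.mem_filter.1 ha).1 hle)

theorem card_minimalSupport_le {n N : ℕ} {p : MvPolynomial (Fin n) ℤ}
    (h : ChainCoverable (p.support : Set (Fin n →₀ ℕ)) N) : (minimalSupport p).card ≤ N :=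
  IsAntichain.card_le_of_chainCoverable (isAntichain_minimalSupport p)
    (h.subset (by exact_mod_cast Finset.filter_subset _ _))

variable {n : ℕ}

theorem sideS_nil (j : Fin n) : sideS ([] : List (Fin n)) j = 0 := by
  simp [sideS]

theorem sideS_cons (x : Fin n) (w : List (Fin n)) (j : Fin n) :
    sideS (x :: w) j = (if x = j then 1 else 0) + MvPolynomial.X x * sideS w j := by
  change ∑ a : Fin (w.length + 1), _ = _
  rw [Fin.sum_univ_succ, sideS, Finset.mul_sum]
  congr 1
  refine Finset.sum_congr rfl fun a _ => ?_
  rw [mul_ite, mul_zero]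
  simp [List.take_succ_cons]

theorem isChain_support_sideS (w : List (Fin n)) (j : Fin n) :
    IsChain (· ≤ ·) ((sideS w j).support : Set (Fin n →₀ ℕ)) := by
  induction w with
  | nil => simp [sideS_nil]
  | cons x w ih =>
    have hsub : ((sideS (x :: w) j).support : Set (Fin n →₀ ℕ)) ⊆
        insert 0 ((Finsupp.single x 1 + ·) '' (sideS w j).support) := by
      intro β hβ
      rw [sideS_cons] at hβ
      rcases Finset.mem_union.1 (MvPolynomial.support_add hβ) with h | h
      · split_ifs at h <;> simp_all
      · simp only [MvPolynomial.support_X_mul, Finset.mem_map] at h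
        obtain ⟨b, hb, rfl⟩ := h
        exact Or.inr ⟨b, hb, rfl⟩
    refine IsChain.mono hsub (IsChain.insert ?_ fun _ _ _ => Or.inl zero_le)
    exact ih.image_of_map_rel _ _ _ fun _ _ h => add_le_add_right h _

theorem card_support_sideS_le (w : List (Fin n)) (j : Fin n) :
    (sideS w j).support.card ≤ w.count j := by
  induction w with
  | nil => simp [sideS_nil]
  | cons x w ih =>
    rw [sideS_cons]
    refine (Finset.card_le_card (MvPolynomial.support_add)).trans ?_
    refine (Finset.card_union_le _ _).trans ?_
    rw [MvPolynomial.support_X_mul, Finset.card_map, List.count_cons]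
    split_ifs with h <;> simp_all [MvPolynomial.support_one]; omega

theorem chainCoverable_support_SE (E : List (Fin n) × List (Fin n)) (j : Fin n) :
    ChainCoverable ((SE E j).support : Set (Fin n →₀ ℕ)) 2 :=
  (IsChain.chainCoverable (isChain_support_sideS E.1 j)).support_sub
    (IsChain.chainCoverable (isChain_support_sideS E.2 j))

theorem chainCoverable_support_sideS_mul {q : MvPolynomial (Fin n) ℤ} {M : ℕ}
    (w : List (Fin n)) (j : Fin n) (hq : ChainCoverable (q.support : Set (Fin n →₀ ℕ)) M) :
    ChainCoverable ((sideS w j * q).support : Set (Fin n →₀ ℕ)) (w.count j * M) := by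
  obtain ⟨cs, hcard, hchain, hcov⟩ := hq.support_mul (sideS w j)
  exact ⟨cs, hcard.trans (Nat.mul_le_mul_right M (card_support_sideS_le w j)), hchain, hcov⟩

theorem minimal_monomials_det_le_general {n : ℕ} (E E' : List (Fin n) × List (Fin n))
    (k ℓ : Fin n) :
    (minimalSupport (SE E k * SE E' ℓ - SE E' k * SE E ℓ)).card ≤
      2 * ((E.1.count k + E.2.count k) + (E.1.count ℓ + E.2.count ℓ)) := by
  have hcov (w : List (Fin n)) (j i : Fin n) :
      ChainCoverable ((sideS w j * SE E' i).support : Set (Fin n →₀ ℕ)) (w.count j * 2) :=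
    chainCoverable_support_sideS_mul w j (chainCoverable_support_SE E' i)
  have hexpand : SE E k * SE E' ℓ - SE E' k * SE E ℓ =
      (sideS E.1 k * SE E' ℓ - sideS E.2 k * SE E' ℓ) -
        (sideS E.1 ℓ * SE E' k - sideS E.2 ℓ * SE E' k) := by
    simp only [SE]; ring
  rw [hexpand]
  refine (card_minimalSupport_le
    (((hcov _ _ _).support_sub (hcov _ _ _)).support_sub
      ((hcov _ _ _).support_sub (hcov _ _ _)))).trans_eq ?_
  ring

/-- the determinant `t_{kℓ}^{E,E'}` has at most `2(|E|_{x_k} + |E|_{x_ℓ})`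
minimal monomials. -/
theorem minimal_monomials_det_le {n : ℕ} (E E' : List (Fin n) × List (Fin n))
    (k ℓ : Fin n) (hkl : k < ℓ) :
    (minimalSupport (SE E k * SE E' ℓ - SE E' k * SE E ℓ)).card ≤
      2 * ((E.1.count k + E.2.count k) + (E.1.count ℓ + E.2.count ℓ)) :=
  minimal_monomials_det_le_general E E' k ℓ

end WordEquations
end
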